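/- arXiv:math/0306030 — 6 statements merged into one kernel-verified Lean document; each statement's English description precedes it below -/
import Mathlib

section
/- Let A be an abelian category, (H_i)_{i∈ℤ} a family of objects of A with H_i = 0 for all but finitely many i, and η = (η_i : H_i → H_{i+2})_{i∈ℤ} a family of morphisms; for k ≥ 0 write η^k : H_i → H_{i+2k} for the k-fold composite. Assume that η^k : H_{-k} → H_k is an isomorphism for every k ≥ 0. For i ≥ 0 let P_{-i} := ker(η^{i+1} : H_{-i} → H_{i+2}), with kernel inclusion ι_{-i} : P_{-i} → H_{-i}. Then for every i ≥ 0 the morphisms η^k ∘ ι_{-i-2k} : P_{-i-2k} → H_{-i} (k ≥ 0) exhibit H_{-i} as the (finite) biproduct ⨁_{k≥0} P_{-i-2k}, i.e. the induced morphism from the coproduct is an isomorphism; likewise the morphisms η^{i+k} ∘ ι_{-i-2k} : P_{-i-2k} → H_{i} exhibit H_i as ⨁_{k≥0} P_{-i-2k}. -/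
open CategoryTheory CategoryTheory.Limits

attribute [local instance] CategoryTheory.Abelian.hasFiniteBiproducts

universe v u

variable {A : Type u} [Category.{v} A] [Abelian A]

/-- Given objects `H i` (`i : ℤ`) and morphisms `η i : H i ⟶ H (i + 2)`, the
`k`-fold composite `η^k : H i ⟶ H j` for `j = i + 2k`. -/
def etaPow (H : ℤ → A) (η : ∀ i : ℤ, H i ⟶ H (i + 2)) :
    ∀ (k : ℕ) (i j : ℤ), j = i + 2 * k → (H i ⟶ H j)
  | 0, i, j, h => eqToHom (congrArg H (by omega : i = j))
  | (k + 1), i, j, h => η i ≫ etaPow H η k (i + 2) j (by omega)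

/-- The primitive object `P_{-m} = ker (η^{m+1} : H_{-m} ⟶ H_{m+2})`. -/
noncomputable def primObj (H : ℤ → A) (η : ∀ i : ℤ, H i ⟶ H (i + 2)) (m : ℕ) : A :=
  kernel (etaPow H η (m + 1) (-(m : ℤ)) ((m : ℤ) + 2) (by push_cast; ring))

/-- The canonical map `η^k ∘ ι : P_{-i-2k} ⟶ H_{-i}`. -/
noncomputable def primToNeg (H : ℤ → A) (η : ∀ i : ℤ, H i ⟶ H (i + 2)) (i k : ℕ) :
    primObj H η (i + 2 * k) ⟶ H (-(i : ℤ)) :=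
  kernel.ι _ ≫ etaPow H η k (-((i + 2 * k : ℕ) : ℤ)) (-(i : ℤ)) (by push_cast; ring)

/-- The canonical map `η^{i+k} ∘ ι : P_{-i-2k} ⟶ H_i`. -/
noncomputable def primToPos (H : ℤ → A) (η : ∀ i : ℤ, H i ⟶ H (i + 2)) (i k : ℕ) :
    primObj H η (i + 2 * k) ⟶ H ((i : ℤ)) :=
  kernel.ι _ ≫ etaPow H η (i + k) (-((i + 2 * k : ℕ) : ℤ)) ((i : ℤ)) (by push_cast; ring)

/-!
Since `η^{i+2} : H_{-i-2} ⟶ H_{i+2}` is an isomorphism and factors as `η^{i+1} ∘ η`, the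
morphism `η^{i+1} : H_{-i} ⟶ H_{i+2}` is split by `η`, so `(ι, η) : P_{-i} ⊞ H_{-i-2} ⟶ H_{-i}`
is an isomorphism. Iterating this splitting until `H_{-i-2n}` vanishes decomposes `H_{-i}`;
composing with the isomorphism `η^i : H_{-i} ⟶ H_i` decomposes `H_i`.
-/

namespace CategoryTheory.Limits

variable {C : Type*} [Category C] [Preadditive C]

lemma isIso_biprod_desc_kernelι_of_isIso_comp {X Y Z : C} (f : X ⟶ Z) [HasKernel f]
    [HasBinaryBiproduct (kernel f) Y] (s : Y ⟶ X) [IsIso (s ≫ f)] :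
    IsIso (biprod.desc (kernel.ι f) s) := by
  let r := f ≫ inv (s ≫ f)
  have hsr : s ≫ r = 𝟙 Y := by rw [← Category.assoc, IsIso.hom_inv_id]
  have hrf : r ≫ s ≫ f = f := by simp [r]
  refine ⟨biprod.lift (kernel.lift f (𝟙 X - r ≫ s) (by simp [hrf])) r, ?_, by simp⟩
  ext
  · simp [r]
  · simp [r]
  · simp [reassoc_of% hsr]
  · simp [hsr]

lemma isZero_biproduct_of_isEmpty {J : Type*} [IsEmpty J] (F : J → C) [HasBiproduct F] :
    IsZero (⨁ F) := by
  rw [IsZero.iff_id_eq_zero]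
  ext j
  exact isEmptyElim j

lemma isIso_biproduct_desc_iso_comp {J : Type*} {F G : J → C} [HasBiproduct F] [HasBiproduct G]
    {X : C} (e : ∀ j, F j ≅ G j) (g : ∀ j, G j ⟶ X) [IsIso (biproduct.desc g)] :
    IsIso (biproduct.desc fun j => (e j).hom ≫ g j) := by
  rw [← biproduct.map_desc]
  exact IsIso.comp_isIso' (biproduct.mapIso e).isIso_hom inferInstance

lemma isIso_biproduct_desc_of_succ [HasFiniteBiproducts C] [HasBinaryBiproducts C] {n : ℕ}
    {F : Fin (n + 1) → C} {X Y : C}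
    (v : ∀ j, F j ⟶ X) (w : ∀ k : Fin n, F k.succ ⟶ Y) (s : Y ⟶ X)
    (hv : ∀ k, v k.succ = w k ≫ s) (hw : IsIso (biproduct.desc w))
    (h₀ : IsIso (biprod.desc (v 0) s)) :
    IsIso (biproduct.desc v) := by
  let ξ : F 0 ⊞ (⨁ fun k : Fin n => F k.succ) ≅ ⨁ F :=
    { hom := biprod.desc (biproduct.ι F 0) (biproduct.desc fun k => biproduct.ι F k.succ)
      inv := biproduct.desc fun j =>
        Fin.cases (motive := fun j => F j ⟶ _) biprod.inl
          (fun k => biproduct.ι (fun k : Fin n => F k.succ) k ≫ biprod.inr) j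
      inv_hom_id := by
        refine biproduct.hom_ext' _ _ fun j => ?_
        induction j using Fin.cases <;> simp }
  have hfac : ξ.hom ≫ biproduct.desc v =
      (biprod.mapIso (Iso.refl _) (asIso (biproduct.desc w))).hom ≫ biprod.desc (v 0) s := by
    ext <;> simp [ξ, hv]
  rw [← ξ.inv_hom_id_assoc (biproduct.desc v), hfac]
  have := ξ.isIso_inv
  infer_instance

end CategoryTheory.Limits

section Lefschetz

variable (H : ℤ → A) (η : ∀ i : ℤ, H i ⟶ H (i + 2))

omit [Abelian A] in
lemma etaPow_comp (k l : ℕ) (i j m : ℤ) (h : j = i + 2 * k) (h' : m = j + 2 * l) :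
    etaPow H η k i j h ≫ etaPow H η l j m h' = etaPow H η (l + k) i m (by omega) := by
  induction k generalizing i with
  | zero =>
    obtain rfl : i = j := by omega
    simp [etaPow]
  | succ k ih => simp [etaPow, ih]

omit [Abelian A] in
lemma etaPow_congr {k k' : ℕ} {i i' j j' : ℤ} (hk : k = k') (hi : i = i') (hj : j = j')
    (h : j = i + 2 * k) :
    etaPow H η k i j h =
      eqToHom (congrArg H hi) ≫ etaPow H η k' i' j' (by omega) ≫ eqToHom (congrArg H hj.symm) := by
  subst hk hi hj
  simp

noncomputable def primι (m : ℕ) : primObj H η m ⟶ H (-(m : ℤ)) := kernel.ι _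

lemma primToNeg_eq (i k : ℕ) :
    primToNeg H η i k =
      primι H η (i + 2 * k) ≫ etaPow H η k _ (-(i : ℤ)) (by push_cast; ring) :=
  rfl

lemma primToPos_eq (i k : ℕ) :
    primToPos H η i k =
      primToNeg H η i k ≫ etaPow H η i (-(i : ℤ)) (i : ℤ) (by ring) := by
  rw [primToNeg_eq, Category.assoc, etaPow_comp]
  rfl

lemma eqToHom_comp_primι_comp_etaPow {m m' k k' : ℕ} {j : ℤ} (hm : m = m') (hk : k = k')
    (h : j = -(m : ℤ) + 2 * k) (h' : j = -(m' : ℤ) + 2 * k') :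
    eqToHom (congrArg (primObj H η) hm) ≫ primι H η m' ≫ etaPow H η k' (-(m' : ℤ)) j h' =
      primι H η m ≫ etaPow H η k (-(m : ℤ)) j h := by
  subst hm hk
  simp

lemma primToNeg_succ (i k : ℕ) :
    primToNeg H η i (k + 1) =
      eqToHom (congrArg (primObj H η) (by ring)) ≫ primToNeg H η (i + 2) k ≫
        etaPow H η 1 (-((i + 2 : ℕ) : ℤ)) (-(i : ℤ)) (by push_cast; ring) := by
  rw [primToNeg_eq, primToNeg_eq, Category.assoc, etaPow_comp]
  exact (eqToHom_comp_primι_comp_etaPow H η (by ring) (by omega) _ _).symm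

lemma primToNeg_zero (i : ℕ) : primToNeg H η i 0 = primι H η i :=
  Category.comp_id _

lemma isIso_biprod_desc_primToNeg_zero (i : ℕ)
    [IsIso (etaPow H η (i + 2) (-((i + 2 : ℕ) : ℤ)) ((i + 2 : ℕ) : ℤ) (by push_cast; ring))] :
    IsIso (biprod.desc (primToNeg H η i 0)
      (etaPow H η 1 (-((i + 2 : ℕ) : ℤ)) (-(i : ℤ)) (by push_cast; ring))) := by
  have : IsIso (etaPow H η 1 (-((i + 2 : ℕ) : ℤ)) (-(i : ℤ)) (by push_cast; ring) ≫
      etaPow H η (i + 1) (-(i : ℤ)) ((i : ℤ) + 2) (by push_cast; ring)) := by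
    rw [etaPow_comp, etaPow_congr H η (k' := i + 2) (j' := ((i + 2 : ℕ) : ℤ)) (by omega) rfl
      (by push_cast; ring)]
    infer_instance
  rw [primToNeg_zero]
  exact isIso_biprod_desc_kernelι_of_isIso_comp _ _

theorem isIso_biproduct_desc_primToNeg
    (hHL : ∀ k : ℕ, IsIso (etaPow H η k (-(k : ℤ)) (k : ℤ) (by ring))) (n i : ℕ)
    (hz : IsZero (H (-((i + 2 * n : ℕ) : ℤ)))) :
    IsIso (biproduct.desc fun k : Fin n => primToNeg H η i k) := by
  induction n generalizing i with
  | zero => exact IsZero.isIso (isZero_biproduct_of_isEmpty _) hz _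
  | succ n ih =>
    have e : ∀ k : Fin n, primObj H η (i + 2 * (k.succ : ℕ)) = primObj H η (i + 2 + 2 * k) :=
      fun k => congrArg _ (by simp only [Fin.val_succ]; ring)
    have hrest : IsIso (biproduct.desc fun k : Fin n =>
        (eqToIso (e k)).hom ≫ primToNeg H η (i + 2) k) :=
      have := ih (i + 2) (by convert hz using 4; ring)
      isIso_biproduct_desc_iso_comp _ _
    have := hHL (i + 2)
    exact isIso_biproduct_desc_of_succ _ _ _
      (fun k => (primToNeg_succ H η i k).trans (Category.assoc _ _ _).symm) hrest
      (isIso_biprod_desc_primToNeg_zero H η i)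

end Lefschetz

/-- **Primitive decomposition in an abelian category.** Let `(H_i)_{i ∈ ℤ}` be
objects of an abelian category, zero for all but finitely many `i`, and
`η_i : H_i ⟶ H_{i+2}` morphisms such that `η^k : H_{-k} ⟶ H_k` is an
isomorphism for every `k ≥ 0`.  Then for every `i ≥ 0` and every `N` beyond
which the relevant objects vanish, the maps `η^k ∘ ι : P_{-i-2k} ⟶ H_{-i}`
(`0 ≤ k ≤ N`) exhibit `H_{-i}` as the biproduct `⨁_{k ≥ 0} P_{-i-2k}` (the
induced morphism from the coproduct is an isomorphism), and likewise the maps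
`η^{i+k} ∘ ι : P_{-i-2k} ⟶ H_i` exhibit `H_i` as `⨁_{k ≥ 0} P_{-i-2k}`. -/
theorem primitive_decomposition_abelian (H : ℤ → A)
    (η : ∀ i : ℤ, H i ⟶ H (i + 2))
    (hHL : ∀ k : ℕ, IsIso (etaPow H η k (-(k : ℤ)) (k : ℤ) (by ring))) :
    ∀ i N : ℕ, (∀ k : ℕ, N < k → IsZero (H (-(i : ℤ) - 2 * (k : ℤ)))) →
      IsIso (biproduct.desc (fun k : Fin (N + 1) => primToNeg H η i k))
      ∧ IsIso (biproduct.desc (fun k : Fin (N + 1) => primToPos H η i k)) := by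
  intro i N hvan
  have hneg := isIso_biproduct_desc_primToNeg H η hHL (N + 1) i
    (by convert hvan (N + 1) (by omega) using 2; push_cast; ring)
  have := hHL i
  have hpos : biproduct.desc (fun k : Fin (N + 1) => primToPos H η i k) =
      biproduct.desc (fun k : Fin (N + 1) => primToNeg H η i k) ≫
        etaPow H η i (-(i : ℤ)) (i : ℤ) (by ring) := by
    ext
    simp [primToPos_eq]
  exact ⟨hneg, hpos ▸ inferInstance⟩
end

section
/- Let N be a nilpotent endomorphism of H and W its weight filtration. Then the convolution formula holds: for every k ∈ ℤ, W_k = Σ_{i,j ≥ 0, i−j = k} ( ker(N^{i+1}) ∩ range(N^{j}) ), the sum of subspaces taken over all pairs of nonnegative integers i, j with i − j = k. -/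
/-- `W` is an increasing, exhaustive, bounded-below-and-above filtration of `V`
by `K`-subspaces, indexed by `ℤ`. -/
structure IsZFiltration {K V : Type*} [Field K] [AddCommGroup V] [Module K V]
    (W : ℤ → Submodule K V) : Prop where
  mono : ∀ i : ℤ, W (i - 1) ≤ W i
  eq_bot : ∃ a : ℤ, ∀ i ≤ a, W i = ⊥
  eq_top : ∃ b : ℤ, ∀ i ≥ b, W i = ⊤

/-- `W` is a weight filtration for the nilpotent endomorphism `N`:
(i) `N (W i) ⊆ W (i - 2)` for all `i`, and (ii) for every `i ≥ 0` the map
`Gr_i H → Gr_{-i} H` induced by `N ^ i` is an isomorphism; condition (ii) is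
expressed elementwise: injectivity (`inj`) and surjectivity (`surj`) of the
induced map on the graded pieces `Gr_i = W i / W (i - 1)`. -/
structure IsWeightFiltration {K V : Type*} [Field K] [AddCommGroup V] [Module K V]
    (N : Module.End K V) (W : ℤ → Submodule K V) extends IsZFiltration W : Prop where
  map_mem : ∀ i : ℤ, ∀ x ∈ W i, N x ∈ W (i - 2)
  inj : ∀ i : ℕ, ∀ x ∈ W (i : ℤ), (N ^ i) x ∈ W (-(i : ℤ) - 1) → x ∈ W ((i : ℤ) - 1)
  surj : ∀ i : ℕ, ∀ y ∈ W (-(i : ℤ)), ∃ x ∈ W (i : ℤ), (N ^ i) x - y ∈ W (-(i : ℤ) - 1)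

section Aux

variable {K V : Type*} [Field K] [AddCommGroup V] [Module K V]
  (N : Module.End K V) (W : ℤ → Submodule K V)

lemma aux_wmono (hW : IsZFiltration W) : ∀ {i j : ℤ}, i ≤ j → W i ≤ W j := by
  have key : ∀ t : ℕ, ∀ i : ℤ, W i ≤ W (i + t) := by
    intro t
    induction t with
    | zero => intro i; simp
    | succ t ih =>
      intro i
      refine (ih i).trans ?_
      have := hW.mono (i + t + 1)
      have he : (i + (t : ℤ) + 1) - 1 = i + t := by ring
      rw [he] at this
      refine this.trans ?_
      apply le_of_eq
      congr 1
      push_cast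
      ring
  intro i j hij
  have : W i ≤ W (i + ((j - i).toNat : ℤ)) := key _ i
  rwa [Int.toNat_of_nonneg (by omega), add_sub_cancel] at this

lemma aux_mapPow (hW : IsWeightFiltration N W) :
    ∀ (d : ℕ) (m : ℤ), ∀ x ∈ W m, (N ^ d) x ∈ W (m - 2 * d) := by
  intro d
  induction d with
  | zero => intro m x hx; simpa using hx
  | succ d ih =>
    intro m x hx
    have h1 : (N ^ d) x ∈ W (m - 2 * d) := ih m x hx
    have h2 : N ((N ^ d) x) ∈ W (m - 2 * d - 2) := hW.map_mem _ _ h1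
    have he : (N ^ (d + 1)) x = N ((N ^ d) x) := by
      rw [pow_succ', Module.End.mul_apply]
    rw [he, show (m - 2 * ((d + 1 : ℕ) : ℤ)) = m - 2 * d - 2 by push_cast; ring]
    exact h2

lemma aux_ker_le (hW : IsWeightFiltration N W) (i : ℕ) :
    ∀ x, (N ^ (i + 1)) x = 0 → x ∈ W (i : ℤ) := by
  obtain ⟨b, hb⟩ := hW.eq_top
  have key : ∀ t : ℕ, ∀ x, (N ^ (i + 1)) x = 0 → x ∈ W ((i : ℤ) + t) → x ∈ W (i : ℤ) := by
    intro t
    induction t with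
    | zero => intro x _ hx; simpa using hx
    | succ t ih =>
      intro x hx0 hx
      have hmem : x ∈ W (((i + t + 1 : ℕ) : ℤ)) := by
        rw [show ((i + t + 1 : ℕ) : ℤ) = (i : ℤ) + ((t + 1 : ℕ) : ℤ) by push_cast; ring]
        exact hx
      have hz : (N ^ (i + t + 1)) x = 0 := by
        have he : (N ^ (i + t + 1)) x = (N ^ t) ((N ^ (i + 1)) x) := by
          rw [← Module.End.mul_apply, ← pow_add]
          congr 2
          omega
        rw [he, hx0, map_zero]
      have hstep := hW.inj (i + t + 1) x hmem (by rw [hz]; exact zero_mem _)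
      apply ih x hx0
      rwa [show ((i + t + 1 : ℕ) : ℤ) - 1 = (i : ℤ) + (t : ℕ) by push_cast; ring] at hstep
  intro x hx
  have hxtop : x ∈ W ((i : ℤ) + ((b - i).toNat : ℤ)) := by
    have h1 : W b = ⊤ := hb b le_rfl
    have hx' : x ∈ W b := by rw [h1]; trivial
    exact aux_wmono W hW.toIsZFiltration (by omega) hx'
  exact key _ x hx hxtop

/-- cascade for negative part: `W m ⊆ N^j (W j)` for `m ≤ -j`. -/
lemma aux_lemD (hW : IsWeightFiltration N W) (j : ℕ) :
    ∀ (m : ℤ), m ≤ -(j : ℤ) → ∀ x ∈ W m, ∃ y ∈ W (j : ℤ), (N ^ j) y = x := by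
  obtain ⟨a, ha⟩ := hW.eq_bot
  have key : ∀ t : ℕ, ∀ m : ℤ, m - a ≤ t → m ≤ -(j : ℤ) →
      ∀ x ∈ W m, ∃ y ∈ W (j : ℤ), (N ^ j) y = x := by
    intro t
    induction t with
    | zero =>
      intro m hmt _ x hx
      have h1 : W m = ⊥ := ha m (by omega)
      rw [h1, Submodule.mem_bot] at hx
      exact ⟨0, zero_mem _, by rw [map_zero, hx]⟩
    | succ t ih =>
      intro m hmt hmj x hx
      by_cases hma : m ≤ a
      · have h1 : W m = ⊥ := ha m hma
        rw [h1, Submodule.mem_bot] at hx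
        exact ⟨0, zero_mem _, by rw [map_zero, hx]⟩
      · set i : ℕ := (-m).toNat with hi
        have hiz : (i : ℤ) = -m := Int.toNat_of_nonneg (by omega)
        have hij : j ≤ i := by omega
        have hx' : x ∈ W (-(i : ℤ)) := by rw [hiz, neg_neg]; exact hx
        obtain ⟨y, hy, hyw⟩ := hW.surj i x hx'
        have hw : (N ^ i) y - x ∈ W (m - 1) := by
          rwa [show -(i : ℤ) - 1 = m - 1 by omega] at hyw
        obtain ⟨y₂, hy₂, hy₂e⟩ := ih (m - 1) (by omega) (by omega) _ hw
        refine ⟨(N ^ (i - j)) y - y₂, sub_mem ?_ hy₂, ?_⟩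
        · have h1 : (N ^ (i - j)) y ∈ W ((i : ℤ) - 2 * ((i - j : ℕ) : ℤ)) :=
            aux_mapPow N W hW _ _ y hy
          refine aux_wmono W hW.toIsZFiltration ?_ h1
          have : ((i - j : ℕ) : ℤ) = (i : ℤ) - j := by omega
          omega
        · rw [map_sub, ← Module.End.mul_apply, ← pow_add, hy₂e,
            show j + (i - j) = i by omega]
          abel
  intro m hmj x hx
  exact key (m - a).toNat m (by omega) hmj x hx

/-- cascade for nonnegative part. -/
lemma aux_lemC (hW : IsWeightFiltration N W) (k : ℕ) :
    ∀ x ∈ W (k : ℤ), ∃ z y, x = z + N y ∧ (N ^ (k + 1)) z = 0 ∧ y ∈ W ((k : ℤ) + 2) := by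
  obtain ⟨a, ha⟩ := hW.eq_bot
  have key : ∀ t : ℕ, ∀ m : ℤ, m - a ≤ t → m ≤ -(k : ℤ) - 2 →
      ∀ x ∈ W (k : ℤ), (N ^ (k + 1)) x ∈ W m →
      ∃ z y, x = z + N y ∧ (N ^ (k + 1)) z = 0 ∧ y ∈ W ((k : ℤ) + 2) := by
    intro t
    induction t with
    | zero =>
      intro m hmt _ x _ hxm
      have h1 : W m = ⊥ := ha m (by omega)
      rw [h1, Submodule.mem_bot] at hxm
      exact ⟨x, 0, by rw [map_zero, add_zero], hxm, zero_mem _⟩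
    | succ t ih =>
      intro m hmt hmk x hxk hxm
      by_cases hma : m ≤ a
      · have h1 : W m = ⊥ := ha m hma
        rw [h1, Submodule.mem_bot] at hxm
        exact ⟨x, 0, by rw [map_zero, add_zero], hxm, zero_mem _⟩
      · set i : ℕ := (-m).toNat with hi
        have hiz : (i : ℤ) = -m := Int.toNat_of_nonneg (by omega)
        have hik : k + 2 ≤ i := by omega
        have hx' : (N ^ (k + 1)) x ∈ W (-(i : ℤ)) := by rw [hiz, neg_neg]; exact hxm
        obtain ⟨y₁, hy₁, hy₁w⟩ := hW.surj i _ hx'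
        set d : ℕ := i - (k + 1) with hd
        have hNd : (N ^ d) y₁ ∈ W ((i : ℤ) - 2 * ((d : ℕ) : ℤ)) :=
          aux_mapPow N W hW _ _ y₁ hy₁
        have hdz : ((d : ℕ) : ℤ) = (i : ℤ) - k - 1 := by omega
        have hNdk : (N ^ d) y₁ ∈ W (k : ℤ) :=
          aux_wmono W hW.toIsZFiltration (by omega) hNd
        have hx'k : x - (N ^ d) y₁ ∈ W (k : ℤ) := sub_mem hxk hNdk
        have hstep : (N ^ (k + 1)) (x - (N ^ d) y₁) ∈ W (m - 1) := by
          have he : (N ^ (k + 1)) ((N ^ d) y₁) = (N ^ i) y₁ := by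
            rw [← Module.End.mul_apply, ← pow_add]
            congr 2
            omega
          have hneg : (N ^ (k + 1)) x - (N ^ i) y₁ ∈ W (-(i : ℤ) - 1) := by
            have := neg_mem hy₁w
            rwa [neg_sub] at this
          rw [map_sub, he]
          rwa [show -(i : ℤ) - 1 = m - 1 by omega] at hneg
        obtain ⟨z, y₂, hsum, hz, hy₂⟩ := ih (m - 1) (by omega) (by omega) _ hx'k hstep
        have hd1 : 1 ≤ d := by omega
        refine ⟨z, y₂ + (N ^ (d - 1)) y₁, ?_, hz, ?_⟩
        · have he : N ((N ^ (d - 1)) y₁) = (N ^ d) y₁ := by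
            rw [← Module.End.mul_apply, ← pow_succ']
            congr 2
            omega
          rw [map_add, he, ← add_assoc, ← hsum]
          abel
        · refine add_mem hy₂ ?_
          have h1 : (N ^ (d - 1)) y₁ ∈ W ((i : ℤ) - 2 * ((d - 1 : ℕ) : ℤ)) :=
            aux_mapPow N W hW _ _ y₁ hy₁
          refine aux_wmono W hW.toIsZFiltration ?_ h1
          have : ((d - 1 : ℕ) : ℤ) = (i : ℤ) - k - 2 := by omega
          omega
  intro x hxk
  have hxm : (N ^ (k + 1)) x ∈ W ((k : ℤ) - 2 * ((k + 1 : ℕ) : ℤ)) :=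
    aux_mapPow N W hW _ _ x hxk
  have he : (k : ℤ) - 2 * ((k + 1 : ℕ) : ℤ) = -(k : ℤ) - 2 := by push_cast; ring
  rw [he] at hxm
  exact key ((-(k : ℤ) - 2) - a).toNat _ (by omega) le_rfl x hxk hxm

/-- membership in the convolution supremum. -/
lemma aux_mem_conv (k : ℤ) (i j : ℕ) (hij : (i : ℤ) - (j : ℤ) = k) (x : V)
    (hx : x ∈ LinearMap.ker (N ^ (i + 1)) ⊓ LinearMap.range (N ^ j)) :
    x ∈ ⨆ (p : ℕ × ℕ) (_ : (p.1 : ℤ) - (p.2 : ℤ) = k),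
      (LinearMap.ker (N ^ (p.1 + 1)) ⊓ LinearMap.range (N ^ p.2)) :=
  Submodule.mem_iSup_of_mem (i, j) (Submodule.mem_iSup_of_mem hij hx)

/-- `N^d` maps the convolution sum at level `c` into the one at level `c - 2d`,
provided `d ≤ c`. -/
lemma aux_conv_map (d : ℕ) (c : ℤ) (hc : (d : ℤ) ≤ c) (x : V)
    (hx : x ∈ ⨆ (p : ℕ × ℕ) (_ : (p.1 : ℤ) - (p.2 : ℤ) = c),
      (LinearMap.ker (N ^ (p.1 + 1)) ⊓ LinearMap.range (N ^ p.2))) :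
    (N ^ d) x ∈ ⨆ (p : ℕ × ℕ) (_ : (p.1 : ℤ) - (p.2 : ℤ) = c - 2 * d),
      (LinearMap.ker (N ^ (p.1 + 1)) ⊓ LinearMap.range (N ^ p.2)) := by
  have hmap : ((⨆ (p : ℕ × ℕ) (_ : (p.1 : ℤ) - (p.2 : ℤ) = c),
      (LinearMap.ker (N ^ (p.1 + 1)) ⊓ LinearMap.range (N ^ p.2))).map (N ^ d)) ≤
      ⨆ (p : ℕ × ℕ) (_ : (p.1 : ℤ) - (p.2 : ℤ) = c - 2 * d),
      (LinearMap.ker (N ^ (p.1 + 1)) ⊓ LinearMap.range (N ^ p.2)) := by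
    rw [Submodule.map_iSup]
    refine iSup_le fun p => ?_
    rw [Submodule.map_iSup]
    refine iSup_le fun hp => ?_
    rintro _ ⟨z, ⟨hz1, hz2⟩, rfl⟩
    have hdp : d ≤ p.1 := by omega
    refine aux_mem_conv N (c - 2 * d) (p.1 - d) (p.2 + d) (by omega) _ ⟨?_, ?_⟩
    · show (N ^ (p.1 - d + 1)) ((N ^ d) z) = 0
      rw [← Module.End.mul_apply, ← pow_add, show p.1 - d + 1 + d = p.1 + 1 by omega]
      exact hz1
    · obtain ⟨w, hw⟩ := hz2
      exact ⟨w, by rw [← hw, ← Module.End.mul_apply, ← pow_add, Nat.add_comm p.2 d]⟩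
  exact hmap ⟨x, hx, rfl⟩

end Aux

/-- **Convolution formula** for the weight filtration of a nilpotent endomorphism:
`W k = Σ_{i - j = k, i, j ≥ 0} (ker N^{i+1} ∩ range N^j)`. -/
theorem weight_filtration_convolution {K V : Type*} [Field K] [AddCommGroup V]
    [Module K V] [FiniteDimensional K V] (N : Module.End K V) (hN : IsNilpotent N)
    (W : ℤ → Submodule K V) (hW : IsWeightFiltration N W) :
    ∀ k : ℤ, W k = ⨆ (p : ℕ × ℕ) (_ : (p.1 : ℤ) - (p.2 : ℤ) = k),
      (LinearMap.ker (N ^ (p.1 + 1)) ⊓ LinearMap.range (N ^ p.2)) := by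
  obtain ⟨n₀, hn₀⟩ := hN
  set n : ℕ := n₀ + 1 with hn
  have hNn : N ^ n = 0 := by rw [hn, pow_succ', hn₀, mul_zero]
  intro k
  refine le_antisymm ?_ ?_
  · -- hard direction: W k ≤ conv sum, by strong downward induction
    have key : ∀ t : ℕ, ∀ k : ℤ, ((n : ℤ) - 1 - k).toNat ≤ t →
        W k ≤ ⨆ (p : ℕ × ℕ) (_ : (p.1 : ℤ) - (p.2 : ℤ) = k),
          (LinearMap.ker (N ^ (p.1 + 1)) ⊓ LinearMap.range (N ^ p.2)) := by
      intro t
      induction t with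
      | zero =>
        intro k hk x hx
        -- k ≥ n - 1 ≥ 0, so ker N^{k+1} = ⊤
        have hk0 : (n : ℤ) - 1 ≤ k := by omega
        refine aux_mem_conv N k k.toNat 0 (by omega) x ⟨?_, ?_⟩
        · show (N ^ (k.toNat + 1)) x = 0
          rw [show k.toNat + 1 = (k.toNat + 1 - n) + n by omega, pow_add, hNn,
            Module.End.mul_apply]
          simp
        · exact ⟨x, by simp⟩
      | succ t ih =>
        intro k hk x hx
        by_cases hbase : (n : ℤ) - 1 ≤ k
        · refine aux_mem_conv N k k.toNat 0 (by omega) x ⟨?_, ?_⟩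
          · show (N ^ (k.toNat + 1)) x = 0
            rw [show k.toNat + 1 = (k.toNat + 1 - n) + n by omega, pow_add, hNn,
              Module.End.mul_apply]
            simp
          · exact ⟨x, by simp⟩
        · by_cases hk0 : 0 ≤ k
          · -- nonnegative case: use lemC
            have hx' : x ∈ W ((k.toNat : ℕ) : ℤ) := by
              rwa [Int.toNat_of_nonneg hk0]
            obtain ⟨z, y, hsum, hz, hy⟩ := aux_lemC N W hW k.toNat x hx'
            have hzmem : z ∈ ⨆ (p : ℕ × ℕ) (_ : (p.1 : ℤ) - (p.2 : ℤ) = k),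
                (LinearMap.ker (N ^ (p.1 + 1)) ⊓ LinearMap.range (N ^ p.2)) :=
              aux_mem_conv N k k.toNat 0 (by omega) z ⟨hz, ⟨z, by simp⟩⟩
            have hy' : y ∈ W (k + 2) := by
              rwa [Int.toNat_of_nonneg hk0] at hy
            have hyS : y ∈ ⨆ (p : ℕ × ℕ) (_ : (p.1 : ℤ) - (p.2 : ℤ) = k + 2),
                (LinearMap.ker (N ^ (p.1 + 1)) ⊓ LinearMap.range (N ^ p.2)) :=
              ih (k + 2) (by omega) hy'
            have hNy := aux_conv_map N 1 (k + 2) (by omega) y hyS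
            rw [show (k + 2 : ℤ) - 2 * ((1 : ℕ) : ℤ) = k by push_cast; ring] at hNy
            rw [hsum]
            refine add_mem hzmem ?_
            simpa using hNy
          · -- negative case: use lemD with j = -k
            set j : ℕ := (-k).toNat with hj
            have hjz : (j : ℤ) = -k := Int.toNat_of_nonneg (by omega)
            obtain ⟨y, hy, hye⟩ := aux_lemD N W hW j k (by omega) x hx
            have hyS : y ∈ ⨆ (p : ℕ × ℕ) (_ : (p.1 : ℤ) - (p.2 : ℤ) = (j : ℤ)),
                (LinearMap.ker (N ^ (p.1 + 1)) ⊓ LinearMap.range (N ^ p.2)) :=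
              ih (j : ℤ) (by omega) hy
            have hNy := aux_conv_map N j (j : ℤ) le_rfl y hyS
            rw [show (j : ℤ) - 2 * (j : ℤ) = k by omega, hye] at hNy
            exact hNy
    exact key ((n : ℤ) - 1 - k).toNat k le_rfl
  · -- easy direction
    refine iSup_le fun p => iSup_le fun hp => ?_
    rintro x ⟨hx1, hx2⟩
    obtain ⟨y, hy⟩ := hx2
    have hyk : (N ^ (p.1 + p.2 + 1)) y = 0 := by
      have : (N ^ (p.1 + p.2 + 1)) y = (N ^ (p.1 + 1)) ((N ^ p.2) y) := by
        rw [← Module.End.mul_apply, ← pow_add]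
        congr 2
        omega
      rw [this, hy]
      exact hx1
    have hymem : y ∈ W ((p.1 + p.2 : ℕ) : ℤ) := aux_ker_le N W hW (p.1 + p.2) y hyk
    have hxmem : (N ^ p.2) y ∈ W (((p.1 + p.2 : ℕ) : ℤ) - 2 * ((p.2 : ℕ) : ℤ)) :=
      aux_mapPow N W hW _ _ y hymem
    rw [hy] at hxmem
    refine aux_wmono W hW.toIsZFiltration ?_ hxmem
    push_cast
    omega
end

section
/- Let N and M be commuting nilpotent endomorphisms of H (M∘N = N∘M), and let W be the weight filtration of N. Then M preserves W: M(W_j) ⊆ W_j for every j ∈ ℤ. -/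
/-- If `M` and `N` are commuting nilpotent endomorphisms and `W` is the weight
filtration of `N`, then `M` preserves `W`: `M (W j) ⊆ W j` for every `j`. -/
theorem commuting_nilpotent_preserves_weight_filtration {K V : Type*} [Field K]
    [AddCommGroup V] [Module K V] [FiniteDimensional K V]
    (N M : Module.End K V) (hN : IsNilpotent N) (hM : IsNilpotent M)
    (hcomm : M * N = N * M)
    (W : ℤ → Submodule K V) (hW : IsWeightFiltration N W) :
    ∀ j : ℤ, ∀ x ∈ W j, M x ∈ W j := by
  obtain ⟨a, ha⟩ := hW.eq_bot
  obtain ⟨b, hb⟩ := hW.eq_top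
  have mono : ∀ i j : ℤ, i ≤ j → W i ≤ W j := by
    have step : ∀ (n : ℕ) (i : ℤ), W i ≤ W (i + n) := by
      intro n
      induction n with
      | zero => intro i; simp
      | succ n ih =>
        intro i
        refine (ih i).trans ?_
        have := hW.mono (i + n + 1)
        simp only [add_sub_cancel_right] at this
        refine le_of_eq_of_le ?_ (this.trans (le_of_eq ?_)) <;> push_cast <;> ring_nf
    intro i j hij
    obtain ⟨n, rfl⟩ := Int.le.dest hij
    exact step n i
  have npow : ∀ (k : ℕ) (i : ℤ), ∀ x ∈ W i, (N ^ k) x ∈ W (i - 2 * k) := by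
    intro k
    induction k with
    | zero => intro i x hx; simpa using hx
    | succ k ih =>
      intro i x hx
      have h2 := ih (i - 2) (N x) (hW.map_mem i x hx)
      have he : (N ^ (k + 1)) x = (N ^ k) (N x) := by
        rw [pow_succ, Module.End.mul_apply]
      have he2 : i - 2 - 2 * (k : ℤ) = i - 2 * ((k : ℕ) + 1 : ℕ) := by push_cast; ring
      rw [he, ← he2] at *
      exact h2
  have hC : Commute M N := hcomm
  have hc : ∀ (k : ℕ) (x : V), M ((N ^ k) x) = (N ^ k) (M x) := by
    intro k x
    have := DFunLike.congr_fun (hC.pow_right k) x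
    simpa [Module.End.mul_apply] using this
  set c : ℤ := max b (max (-a - 1) 0) with hcdef
  have key : ∀ n : ℕ, ∀ i : ℕ, c ≤ (i : ℤ) + n →
      (∀ x ∈ W (i : ℤ), M x ∈ W (i : ℤ)) ∧
      (∀ x ∈ W (-(i : ℤ) - 1), M x ∈ W (-(i : ℤ) - 1)) := by
    intro n
    induction n with
    | zero =>
      intro i hi
      simp only [Nat.cast_zero, add_zero] at hi
      constructor
      · intro x _
        rw [hb i (le_trans (le_max_left _ _) hi)]
        trivial
      · intro x hx
        have hbot : W (-(i : ℤ) - 1) = ⊥ := by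
          apply ha
          have : -a - 1 ≤ c := le_trans (le_max_left _ _) (le_max_right _ _)
          omega
        rw [hbot] at hx ⊢
        simp only [Submodule.mem_bot] at hx ⊢
        rw [hx]; exact map_zero M
    | succ n ih =>
      intro i hi
      by_cases h : c ≤ (i : ℤ) + n
      · exact ih i h
      · have h1 : c ≤ ((i + 1 : ℕ) : ℤ) + n := by push_cast at hi ⊢; omega
        obtain ⟨ih1, ih2⟩ := ih (i + 1) h1
        have e1 : ((i + 1 : ℕ) : ℤ) = (i : ℤ) + 1 := by push_cast; ring
        constructor
        · intro x hx
          -- M x ∈ W (i+1)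
          have hx1 : M x ∈ W ((i + 1 : ℕ) : ℤ) :=
            ih1 x (mono _ _ (by omega) hx)
          -- N^(i+1) (M x) ∈ W (-(i+1)-1)
          have h2 : (N ^ (i + 1)) x ∈ W (-((i + 1 : ℕ) : ℤ) - 1) := by
            have := npow (i + 1) (i : ℤ) x hx
            have he : (i : ℤ) - 2 * ((i + 1 : ℕ) : ℤ) = -((i + 1 : ℕ) : ℤ) - 1 := by
              push_cast; ring
            rwa [he] at this
          have h3 : (N ^ (i + 1)) (M x) ∈ W (-((i + 1 : ℕ) : ℤ) - 1) := by
            rw [← hc]; exact ih2 _ (by rwa [e1] at h2 ⊢)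
          have := hW.inj (i + 1) (M x) hx1 h3
          rwa [show ((i + 1 : ℕ) : ℤ) - 1 = (i : ℤ) by push_cast; ring] at this
        · intro y hy
          have hy' : y ∈ W (-((i + 1 : ℕ) : ℤ)) := by
            rwa [show -((i + 1 : ℕ) : ℤ) = -(i : ℤ) - 1 by push_cast; ring]
          obtain ⟨x, hxW, hsub⟩ := hW.surj (i + 1) y hy'
          have hMx : M x ∈ W ((i + 1 : ℕ) : ℤ) := ih1 x hxW
          have hNMx : (N ^ (i + 1)) (M x) ∈ W (-(i : ℤ) - 1) := by
            have := npow (i + 1) ((i + 1 : ℕ) : ℤ) (M x) hMx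
            rwa [show ((i + 1 : ℕ) : ℤ) - 2 * ((i + 1 : ℕ) : ℤ) = -(i : ℤ) - 1 by
              push_cast; ring] at this
          have hMsub : M ((N ^ (i + 1)) x - y) ∈ W (-(i : ℤ) - 1) := by
            have h5 := ih2 _ hsub
            rw [show -((i + 1 : ℕ) : ℤ) - 1 = -(i : ℤ) - 2 by push_cast; ring] at h5
            exact mono (-(i : ℤ) - 2) (-(i : ℤ) - 1) (by omega) h5
          have hMy : M y = (N ^ (i + 1)) (M x) - M ((N ^ (i + 1)) x - y) := by
            rw [map_sub, hc]; abel
          rw [hMy]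
          exact Submodule.sub_mem _ hNMx hMsub
  intro j x hx
  rcases le_or_gt 0 j with hj | hj
  · have h1 : c ≤ (j.toNat : ℤ) + (c.toNat : ℕ) := by
      have := Int.self_le_toNat c
      omega
    have := (key c.toNat j.toNat h1).1 x (by rwa [Int.toNat_of_nonneg hj])
    rwa [Int.toNat_of_nonneg hj] at this
  · set i : ℕ := (-j - 1).toNat with hidef
    have hij : -(i : ℤ) - 1 = j := by
      have : ((-j - 1).toNat : ℤ) = -j - 1 := Int.toNat_of_nonneg (by omega)
      omega
    have h1 : c ≤ (i : ℤ) + (c.toNat : ℕ) := by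
      have := Int.self_le_toNat c
      omega
    have := (key c.toNat i h1).2 x (by rwa [hij])
    rwa [hij] at this
end

section
/- Suppose S is a nondegenerate bilinear form on H, either symmetric or antisymmetric, and N is a nilpotent infinitesimal automorphism of (H,S), i.e. S(Nx,y) + S(x,Ny) = 0 for all x, y ∈ H. Then the weight filtration W of N is self-dual with respect to S: for every i ∈ ℤ, (W_i)^⊥ = W_{-i-1}, where U^⊥ := {x ∈ H : S(x,u) = 0 for all u ∈ U}. -/
open Module LinearMap

theorem wf_pow_mem {K V : Type*} [Field K] [AddCommGroup V] [Module K V]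
    {N : Module.End K V} {W : ℤ → Submodule K V} (hW : IsWeightFiltration N W)
    (k : ℕ) (j : ℤ) {x : V} (hx : x ∈ W j) : (N ^ k) x ∈ W (j - 2 * k) := by
  induction k generalizing j x with
  | zero => simpa using hx
  | succ n ih =>
    have h1 : (N ^ (n + 1)) x = (N ^ n) (N x) := by
      rw [pow_succ]; rfl
    have h2 : (N ^ n) (N x) ∈ W (j - 2 - 2 * n) := ih (j - 2) (hW.map_mem j x hx)
    have hidx : j - 2 - 2 * (n : ℤ) = j - 2 * ((n + 1 : ℕ) : ℤ) := by push_cast; ring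
    rw [h1]
    rw [hidx] at h2
    exact h2

theorem wf_S_pow {K V : Type*} [Field K] [AddCommGroup V] [Module K V]
    (S : V →ₗ[K] V →ₗ[K] K) {N : Module.End K V}
    (hinf : ∀ x y : V, S (N x) y + S x (N y) = 0)
    (k : ℕ) (x y : V) : S ((N ^ k) x) y = (-1 : K) ^ k * S x ((N ^ k) y) := by
  induction k generalizing x with
  | zero => simp
  | succ n ih =>
    have h1 : (N ^ (n + 1)) x = (N ^ n) (N x) := by rw [pow_succ]; rfl
    have h2 : (N ^ (n + 1)) y = N ((N ^ n) y) := by rw [pow_succ']; rfl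
    have h3 : S (N x) ((N ^ n) y) = - S x (N ((N ^ n) y)) := by
      linear_combination hinf x ((N ^ n) y)
    calc S ((N ^ (n + 1)) x) y = S ((N ^ n) (N x)) y := by rw [h1]
      _ = (-1 : K) ^ n * S (N x) ((N ^ n) y) := ih (N x)
      _ = (-1 : K) ^ n * (- S x (N ((N ^ n) y))) := by rw [h3]
      _ = (-1 : K) ^ (n + 1) * S x ((N ^ (n + 1)) y) := by rw [h2]; ring

theorem wf_orth {K V : Type*} [Field K] [AddCommGroup V] [Module K V]
    (S : V →ₗ[K] V →ₗ[K] K) {N : Module.End K V}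
    (hinf : ∀ x y : V, S (N x) y + S x (N y) = 0)
    {W : ℤ → Submodule K V} (hW : IsWeightFiltration N W) :
    ∀ a b : ℤ, a + b ≤ -1 → ∀ x ∈ W a, ∀ y ∈ W b, S x y = 0 ∧ S y x = 0 := by
  obtain ⟨a0, ha0⟩ := hW.eq_bot
  suffices H : ∀ n : ℕ, ∀ b : ℤ, b ≤ a0 + n → ∀ a : ℤ, a + b ≤ -1 →
      ∀ x ∈ W a, ∀ y ∈ W b, S x y = 0 ∧ S y x = 0 by
    intro a b hab x hx y hy
    rcases le_or_gt b a0 with h | h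
    · exact H 0 b (by omega) a hab x hx y hy
    · exact H (b - a0).toNat b (by omega) a hab x hx y hy
  intro n
  induction n with
  | zero =>
    intro b hb a _ x _ y hy
    have hy0 : y = 0 := by
      have := ha0 b (by omega)
      rw [this] at hy
      simpa using hy
    simp [hy0]
  | succ n ih =>
    intro b hb a hab x hx y hy
    by_cases hba : b ≤ a0
    · have hy0 : y = 0 := by
        have := ha0 b hba
        rw [this] at hy
        simpa using hy
      simp [hy0]
    push_neg at hba
    rcases lt_or_ge a b with hab' | hab'
    · have := ih a (by omega) b (by omega) y hy x hx
      exact ⟨this.2, this.1⟩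
    · have hb1 : b ≤ -1 := by omega
      set m : ℕ := (-b).toNat with hm
      have hmb : (m : ℤ) = -b := by omega
      have hy' : y ∈ W (-(m : ℤ)) := by rw [hmb, neg_neg]; exact hy
      obtain ⟨z, hz, hzy⟩ := hW.surj m y hy'
      have hzy' : (N ^ m) z - y ∈ W (b - 1) := by
        have : -(m : ℤ) - 1 = b - 1 := by omega
        rwa [this] at hzy
      have h1 := ih (b - 1) (by omega) a (by omega) x hx _ hzy'
      have hNx : (N ^ m) x ∈ W (a + 2 * b) := by
        have := wf_pow_mem hW m a hx
        have hidx : a - 2 * (m : ℤ) = a + 2 * b := by omega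
        rwa [hidx] at this
      have hz' : z ∈ W (-b) := by rwa [hmb] at hz
      have h2 := ih (a + 2 * b) (by omega) (-b) (by omega) z hz' _ hNx
      -- S x (N^m z) = 0
      have e1 : S ((N ^ m) x) z = (-1 : K) ^ m * S x ((N ^ m) z) := wf_S_pow S hinf m x z
      have hxNz : S x ((N ^ m) z) = 0 := by
        have h0 : (-1 : K) ^ m * S x ((N ^ m) z) = 0 := by rw [← e1]; exact h2.2
        rcases mul_eq_zero.mp h0 with h | h
        · exact absurd h (by simp)
        · exact h
      have e2 : S ((N ^ m) z) x = (-1 : K) ^ m * S z ((N ^ m) x) := wf_S_pow S hinf m z x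
      have hNzx : S ((N ^ m) z) x = 0 := by rw [e2, h2.1, mul_zero]
      constructor
      · have : S x ((N ^ m) z - y) = S x ((N ^ m) z) - S x y := map_sub _ _ _
        rw [h1.1, hxNz] at this
        linear_combination this
      · have : S ((N ^ m) z - y) x = S ((N ^ m) z) x - S y x := by
          rw [map_sub]; simp
        rw [h1.2, hNzx] at this
        linear_combination this

theorem wf_step {K V : Type*} [Field K] [AddCommGroup V] [Module K V]
    [FiniteDimensional K V] {N : Module.End K V} {W : ℤ → Submodule K V}
    (hW : IsWeightFiltration N W) (i : ℕ) :
    finrank K (W (i : ℤ)) + finrank K (W (-(i : ℤ) - 1)) =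
      finrank K (W ((i : ℤ) - 1)) + finrank K (W (-(i : ℤ))) := by
  set Q : Submodule K V := W (-(i : ℤ) - 1) with hQ
  let g : W (i : ℤ) →ₗ[K] V ⧸ Q := Q.mkQ ∘ₗ (N ^ i : Module.End K V) ∘ₗ (W (i : ℤ)).subtype
  have hker : LinearMap.ker g = (W ((i : ℤ) - 1)).comap (W (i : ℤ)).subtype := by
    ext ⟨x, hx⟩
    simp only [LinearMap.mem_ker, Submodule.mem_comap, Submodule.subtype_apply,
      LinearMap.comp_apply, Submodule.mkQ_apply, Submodule.Quotient.mk_eq_zero, g]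
    constructor
    · intro h
      exact hW.inj i x hx h
    · intro h
      have := wf_pow_mem hW i ((i : ℤ) - 1) h
      have hidx : (i : ℤ) - 1 - 2 * (i : ℤ) = -(i : ℤ) - 1 := by ring
      rwa [hidx] at this
  have hrange : LinearMap.range g = (W (-(i : ℤ))).map Q.mkQ := by
    ext w
    constructor
    · rintro ⟨⟨x, hx⟩, rfl⟩
      refine ⟨(N ^ i) x, ?_, rfl⟩
      have := wf_pow_mem hW i (i : ℤ) hx
      have hidx : (i : ℤ) - 2 * (i : ℤ) = -(i : ℤ) := by ring
      rwa [hidx] at this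
    · rintro ⟨y, hy, rfl⟩
      obtain ⟨x, hx, hd⟩ := hW.surj i y hy
      exact ⟨⟨x, hx⟩, (Submodule.Quotient.eq Q).mpr hd⟩
  have e1 : finrank K (LinearMap.ker g) = finrank K (W ((i : ℤ) - 1)) := by
    rw [hker]
    exact LinearEquiv.finrank_eq (Submodule.comapSubtypeEquivOfLe (hW.mono (i : ℤ)))
  have hA : finrank K (LinearMap.range g) + finrank K (W ((i : ℤ) - 1)) =
      finrank K (W (i : ℤ)) := by
    rw [← e1]
    exact LinearMap.finrank_range_add_finrank_ker g
  let h : W (-(i : ℤ)) →ₗ[K] V ⧸ Q := Q.mkQ ∘ₗ (W (-(i : ℤ))).subtype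
  have hkerh : LinearMap.ker h = Q.comap (W (-(i : ℤ))).subtype := by
    ext ⟨x, hx⟩
    simp [h]
  have hrangeh : LinearMap.range h = (W (-(i : ℤ))).map Q.mkQ := by
    rw [LinearMap.range_comp, Submodule.range_subtype]
  have hQle : Q ≤ W (-(i : ℤ)) := by
    have := hW.mono (-(i : ℤ))
    rwa [hQ]
  have e2 : finrank K (LinearMap.ker h) = finrank K Q := by
    rw [hkerh]
    exact LinearEquiv.finrank_eq (Submodule.comapSubtypeEquivOfLe hQle)
  have hB : finrank K (LinearMap.range g) + finrank K Q = finrank K (W (-(i : ℤ))) := by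
    rw [hrange, ← hrangeh, ← e2]
    exact LinearMap.finrank_range_add_finrank_ker h
  omega

theorem wf_dim {K V : Type*} [Field K] [AddCommGroup V] [Module K V]
    [FiniteDimensional K V] {N : Module.End K V} {W : ℤ → Submodule K V}
    (hW : IsWeightFiltration N W) (i : ℤ) :
    finrank K (W i) + finrank K (W (-i - 1)) = finrank K V := by
  obtain ⟨a0, ha0⟩ := hW.eq_bot
  obtain ⟨b0, hb0⟩ := hW.eq_top
  have key : ∀ k : ℕ, finrank K (W (k : ℤ)) + finrank K (W (-(k : ℤ) - 1)) = finrank K V := by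
    have step : ∀ k : ℕ, finrank K (W (k : ℤ)) + finrank K (W (-(k : ℤ) - 1)) =
        finrank K (W ((k + 1 : ℕ) : ℤ)) + finrank K (W (-((k + 1 : ℕ) : ℤ) - 1)) := by
      intro k
      have := wf_step hW (k + 1)
      have e1 : ((k + 1 : ℕ) : ℤ) - 1 = (k : ℤ) := by push_cast; ring
      have e2 : -((k + 1 : ℕ) : ℤ) = -(k : ℤ) - 1 := by push_cast; ring
      rw [e1, e2] at this
      rw [e2]
      omega
    have chain : ∀ k : ℕ, finrank K (W (0 : ℤ)) + finrank K (W (-(0 : ℤ) - 1)) =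
        finrank K (W (k : ℤ)) + finrank K (W (-(k : ℤ) - 1)) := by
      intro k
      induction k with
      | zero => rfl
      | succ n ih => rw [ih]; exact step n
    intro k
    set n : ℕ := (max b0 (-a0 - 1)).toNat + k with hn
    have h1 : finrank K (W (k : ℤ)) + finrank K (W (-(k : ℤ) - 1)) =
        finrank K (W (n : ℤ)) + finrank K (W (-(n : ℤ) - 1)) := by
      rw [← chain k, chain n]
    have htop : W (n : ℤ) = ⊤ := hb0 _ (by omega)
    have hbot : W (-(n : ℤ) - 1) = ⊥ := ha0 _ (by omega)
    rw [h1, htop, hbot, finrank_top, finrank_bot, add_zero]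
  rcases le_or_gt 0 i with h | h
  · have := key i.toNat
    rwa [show ((i.toNat : ℕ) : ℤ) = i by omega] at this
  · have := key (-i - 1).toNat
    rw [show (((-i - 1).toNat : ℕ) : ℤ) = -i - 1 by omega] at this
    rw [show -(-i - 1) - 1 = i by ring] at this
    omega

/-- If `N` is a nilpotent infinitesimal automorphism of `(H, S)`, with `S` a
nondegenerate bilinear form which is symmetric or antisymmetric, then the weight
filtration of `N` is self-dual: `(W i)^⊥ = W (-i - 1)`, where the orthogonal is
`U^⊥ = {x | S x u = 0 for all u ∈ U}`. -/
theorem weight_filtration_self_dual {K V : Type*} [Field K] [AddCommGroup V]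
    [Module K V] [FiniteDimensional K V]
    (S : V →ₗ[K] V →ₗ[K] K)
    (hnd : ∀ x : V, (∀ y : V, S x y = 0) → x = 0)
    (hsym : (∀ x y : V, S x y = S y x) ∨ (∀ x y : V, S x y = - S y x))
    (N : Module.End K V) (hN : IsNilpotent N)
    (hinf : ∀ x y : V, S (N x) y + S x (N y) = 0)
    (W : ℤ → Submodule K V) (hW : IsWeightFiltration N W) :
    ∀ i : ℤ, ∀ x : V, (∀ u ∈ W i, S x u = 0) ↔ x ∈ W (-i - 1) := by
  have horth := wf_orth S hinf hW
  intro i x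
  constructor
  · intro hx
    let f : V →ₗ[K] Module.Dual K (W i) := (W i).subtype.dualMap ∘ₗ S
    have hxker : x ∈ LinearMap.ker f := by
      rw [LinearMap.mem_ker]
      exact LinearMap.ext fun u => hx u u.2
    have hSinj : Function.Injective S := by
      intro u v huv
      have h0 : S (u - v) = 0 := by rw [map_sub, huv, sub_self]
      have := hnd (u - v) (fun y => by rw [h0]; rfl)
      exact sub_eq_zero.mp this
    have hSsurj : Function.Surjective S :=
      (LinearMap.injective_iff_surjective_of_finrank_eq_finrank
        (Subspace.dual_finrank_eq (K := K) (V := V)).symm).mp hSinj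
    have hdsurj : Function.Surjective (W i).subtype.dualMap :=
      LinearMap.dualMap_surjective_of_injective (W i).injective_subtype
    have hfsurj : Function.Surjective f := hdsurj.comp hSsurj
    have hrank : finrank K (LinearMap.ker f) + finrank K (W i) = finrank K V := by
      have h1 := LinearMap.finrank_range_add_finrank_ker f
      rw [LinearMap.range_eq_top.mpr hfsurj, finrank_top,
        Subspace.dual_finrank_eq] at h1
      omega
    have hle : W (-i - 1) ≤ LinearMap.ker f := by
      intro y hy
      rw [LinearMap.mem_ker]
      exact LinearMap.ext fun u => (horth (-i - 1) i (by omega) y hy u u.2).1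
    have heq : W (-i - 1) = LinearMap.ker f := by
      refine Submodule.eq_of_le_of_finrank_le hle ?_
      have hd := wf_dim hW i
      omega
    rw [heq]
    exact hxker
  · intro hx u hu
    exact (horth (-i - 1) i (by omega) x hx u hu).1
end

section
/- Suppose S is a nondegenerate bilinear form on H, either symmetric or antisymmetric, and N is a nilpotent infinitesimal automorphism of (H,S), i.e. S(Nx,y) + S(x,Ny) = 0 for all x, y ∈ H; let W be the weight filtration of N. Then for every i ≥ 0 the pairing (a,b) ↦ S(a, N^i b) on W_i vanishes whenever a ∈ W_{i-1} or b ∈ W_{i-1}, hence descends to a well-defined bilinear form S^N_i on Gr_i H = W_i/W_{i-1}, and S^N_i is nondegenerate. -/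
section Aux

variable {K V : Type*} [Field K] [AddCommGroup V] [Module K V]
  {W : ℤ → Submodule K V}

lemma IsZFiltration.le' (hW : IsZFiltration W) {j j' : ℤ} (h : j ≤ j') : W j ≤ W j' := by
  have key : ∀ n : ℕ, ∀ j : ℤ, W j ≤ W (j + n) := by
    intro n
    induction n with
    | zero => intro j; simp
    | succ n ih =>
      intro j
      refine (ih j).trans ?_
      have h1 := hW.mono (j + n + 1)
      have e : j + n + 1 - 1 = j + (n : ℤ) := by ring
      rw [e] at h1
      have e2 : j + ((n : ℕ) + 1 : ℕ) = j + (n : ℤ) + 1 := by push_cast; ring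
      rw [e2]
      exact h1
  have e : j' = j + ((j' - j).toNat : ℤ) := by omega
  rw [e]
  exact key _ j

lemma IsWeightFiltration.pow_mem' {N : Module.End K V} (hW : IsWeightFiltration N W)
    (k : ℕ) {j : ℤ} {x : V} (hx : x ∈ W j) : (N ^ k) x ∈ W (j - 2 * k) := by
  induction k generalizing j x with
  | zero => simpa using hx
  | succ k ih =>
    have h1 : N x ∈ W (j - 2) := hW.map_mem j x hx
    have h2 := ih h1
    have e : j - 2 - 2 * k = j - 2 * ((k : ℕ) + 1 : ℕ) := by push_cast; ring
    rw [e] at h2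
    rw [pow_succ, Module.End.mul_apply]
    exact h2

variable {S : V →ₗ[K] V →ₗ[K] K} {N : Module.End K V}

lemma pow_move (hinf : ∀ x y : V, S (N x) y + S x (N y) = 0) (k : ℕ) (x y : V) :
    S x ((N ^ k) y) = (-1 : K) ^ k * S ((N ^ k) x) y := by
  induction k generalizing x y with
  | zero => simp
  | succ k ih =>
    have h1 : (N ^ (k + 1)) y = (N ^ k) (N y) := by rw [pow_succ, Module.End.mul_apply]
    have h2 : (N ^ (k + 1)) x = N ((N ^ k) x) := by rw [pow_succ', Module.End.mul_apply]
    have h3 : S ((N ^ k) x) (N y) = - S (N ((N ^ k) x)) y :=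
      eq_neg_of_add_eq_zero_right (hinf ((N ^ k) x) y)
    rw [h1, ih, h3, h2]
    ring

/-- Orthogonality of the weight filtration: `S (W p) (W q) = 0` when `p + q ≤ -1`. -/
lemma orth (hsym : (∀ x y : V, S x y = S y x) ∨ (∀ x y : V, S x y = - S y x))
    (hinf : ∀ x y : V, S (N x) y + S x (N y) = 0)
    (hW : IsWeightFiltration N W) :
    ∀ p q : ℤ, p + q ≤ -1 → ∀ x ∈ W p, ∀ y ∈ W q, S x y = 0 := by
  obtain ⟨a, ha⟩ := hW.eq_bot
  -- key claim for nonnegative first index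
  have Pk : ∀ j : ℕ, ∀ k : ℕ, -a - 1 - k ≤ (j : ℤ) →
      ∀ x ∈ W (k : ℤ), ∀ y ∈ W (-(k : ℤ) - 1), S x y = 0 := by
    intro j
    induction j with
    | zero =>
      intro k hk x hx y hy
      have hbot : W (-(k : ℤ) - 1) = ⊥ := ha _ (by omega)
      rw [hbot] at hy
      simp only [Submodule.mem_bot] at hy
      rw [hy]; simp
    | succ j ih =>
      intro k hk x hx y hy
      have hy' : y ∈ W (-((k + 1 : ℕ) : ℤ)) := by
        have e : -((k + 1 : ℕ) : ℤ) = -(k : ℤ) - 1 := by push_cast; ring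
        rw [e]; exact hy
      obtain ⟨u, hu, hr⟩ := hW.surj (k + 1) y hy'
      have hk1 : -a - 1 - ((k + 1 : ℕ) : ℤ) ≤ (j : ℤ) := by push_cast at hk ⊢; omega
      -- second term
      have hx1 : x ∈ W ((k + 1 : ℕ) : ℤ) := hW.toIsZFiltration.le' (by push_cast; omega) hx
      have t2 : S x ((N ^ (k + 1)) u - y) = 0 := by
        refine ih (k + 1) hk1 x hx1 _ ?_
        exact hr
      -- first term
      have hNx : (N ^ (k + 1)) x ∈ W (-((k + 1 : ℕ) : ℤ) - 1) := by
        have := hW.pow_mem' (k + 1) hx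
        have e : (k : ℤ) - 2 * ((k + 1 : ℕ) : ℤ) ≤ -((k + 1 : ℕ) : ℤ) - 1 := by
          push_cast; omega
        exact hW.toIsZFiltration.le' e this
      have t1 : S x ((N ^ (k + 1)) u) = 0 := by
        rw [pow_move hinf]
        have z : S u ((N ^ (k + 1)) x) = 0 := ih (k + 1) hk1 u hu _ hNx
        rcases hsym with hs | hs
        · rw [hs]; rw [z]; ring
        · rw [hs]; rw [z]; ring
      have : S x y = S x ((N ^ (k + 1)) u) - S x ((N ^ (k + 1)) u - y) := by
        simp [map_sub]
      rw [this, t1, t2]; ring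
  have Pk' : ∀ k : ℕ, ∀ x ∈ W (k : ℤ), ∀ y ∈ W (-(k : ℤ) - 1), S x y = 0 := by
    intro k
    exact Pk (-a - 1 - k).toNat k (by omega)
  intro p q hpq x hx y hy
  rcases le_or_gt 0 p with hp | hp
  · have hx' : x ∈ W ((p.toNat : ℤ)) := by rwa [Int.toNat_of_nonneg hp]
    have hy' : y ∈ W (-(p.toNat : ℤ) - 1) := by
      refine hW.toIsZFiltration.le' ?_ hy
      omega
    exact Pk' p.toNat x hx' y hy'
  · set k : ℕ := (-p - 1).toNat with hkdef
    have hkk : (k : ℤ) = -p - 1 := by omega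
    have hy' : y ∈ W (k : ℤ) := by
      refine hW.toIsZFiltration.le' ?_ hy
      omega
    have hx' : x ∈ W (-(k : ℤ) - 1) := by rwa [hkk, show -(-p - 1) - 1 = p by ring]
    have z : S y x = 0 := Pk' k y hy' x hx'
    rcases hsym with hs | hs
    · rw [hs, z]
    · rw [hs, z]; ring

end Aux

section Dim

open Module

variable {K V : Type*} [Field K] [AddCommGroup V] [Module K V] [FiniteDimensional K V]
  {W : ℤ → Submodule K V} {N : Module.End K V}

lemma gr_dim (hW : IsWeightFiltration N W) (i : ℕ) :
    finrank K (W (i : ℤ)) + finrank K (W (-(i : ℤ) - 1))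
      = finrank K (W ((i : ℤ) - 1)) + finrank K (W (-(i : ℤ))) := by
  set D := W (-(i : ℤ)) with hD
  set U : Submodule K D := (W (-(i : ℤ) - 1)).comap D.subtype with hU
  have hmem : ∀ x : W (i : ℤ), ((N ^ i).comp (W (i : ℤ)).subtype) x ∈ D := by
    intro x
    have h1 := hW.pow_mem' i x.2
    have e : (i : ℤ) - 2 * i = -(i : ℤ) := by push_cast; ring
    rw [e] at h1
    exact h1
  set g : W (i : ℤ) →ₗ[K] D :=
    LinearMap.codRestrict D ((N ^ i).comp (W (i : ℤ)).subtype) hmem with hg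
  set f : W (i : ℤ) →ₗ[K] D ⧸ U := U.mkQ.comp g with hf
  have hker : LinearMap.ker f = (W ((i : ℤ) - 1)).comap (W (i : ℤ)).subtype := by
    ext x
    have hfx : f x = Submodule.Quotient.mk (g x) := rfl
    constructor
    · intro hx
      rw [LinearMap.mem_ker, hfx, Submodule.Quotient.mk_eq_zero] at hx
      have hx' : (N ^ i) (x : V) ∈ W (-(i : ℤ) - 1) := hx
      exact hW.inj i x x.2 hx'
    · intro hx
      rw [LinearMap.mem_ker, hfx, Submodule.Quotient.mk_eq_zero]
      have h1 := hW.pow_mem' i (Submodule.mem_comap.mp hx)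
      have e : (i : ℤ) - 1 - 2 * i ≤ -(i : ℤ) - 1 := by push_cast; omega
      exact hW.toIsZFiltration.le' e h1
  have hrange : LinearMap.range f = ⊤ := by
    rw [LinearMap.range_eq_top]
    intro z
    obtain ⟨y, rfl⟩ := U.mkQ_surjective z
    obtain ⟨x, hx, hr⟩ := hW.surj i y y.2
    refine ⟨⟨x, hx⟩, ?_⟩
    have hfx : f ⟨x, hx⟩ = Submodule.Quotient.mk (g ⟨x, hx⟩) := rfl
    rw [hfx, Submodule.mkQ_apply, Submodule.Quotient.eq]
    exact hr
  have r1 := LinearMap.finrank_range_add_finrank_ker f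
  rw [hrange, hker, finrank_top] at r1
  have r2 := Submodule.finrank_quotient_add_finrank U
  have hle1 : W (-(i : ℤ) - 1) ≤ D := hW.toIsZFiltration.le' (by omega)
  have hle2 : W ((i : ℤ) - 1) ≤ W (i : ℤ) := hW.toIsZFiltration.le' (by omega)
  have e1 : finrank K U = finrank K (W (-(i : ℤ) - 1)) :=
    (Submodule.comapSubtypeEquivOfLe hle1).finrank_eq
  have e2 : finrank K ((W ((i : ℤ) - 1)).comap (W (i : ℤ)).subtype)
      = finrank K (W ((i : ℤ) - 1)) :=
    (Submodule.comapSubtypeEquivOfLe hle2).finrank_eq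
  omega

lemma sum_dim (hW : IsWeightFiltration N W) (p : ℤ) :
    finrank K (W (p - 1)) + finrank K (W (-p)) = finrank K V := by
  have Gz : ∀ p : ℤ, finrank K (W p) + finrank K (W (-p - 1))
      = finrank K (W (p - 1)) + finrank K (W (-p)) := by
    intro p
    rcases le_or_gt 0 p with hp | hp
    · have h := gr_dim hW p.toNat
      rw [show ((p.toNat : ℕ) : ℤ) = p by omega] at h
      exact h
    · have h := gr_dim hW (-p).toNat
      rw [show (((-p).toNat : ℕ) : ℤ) = -p by omega, show -(-p) - 1 = p - 1 by ring,
        show -(-p) = p by ring] at h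
      omega
  obtain ⟨a, ha⟩ := hW.eq_bot
  obtain ⟨b, hb⟩ := hW.eq_top
  have step : ∀ m : ℕ, ∀ p : ℤ, finrank K (W (p - 1)) + finrank K (W (-p))
      = finrank K (W (p + m - 1)) + finrank K (W (-(p + m))) := by
    intro m
    induction m with
    | zero =>
      intro p
      rw [show p + ((0 : ℕ) : ℤ) - 1 = p - 1 by push_cast; ring,
        show -(p + ((0 : ℕ) : ℤ)) = -p by push_cast; ring]
    | succ m ih =>
      intro p
      rw [show p + ((m + 1 : ℕ) : ℤ) = (p + 1) + m by push_cast; ring, ← ih (p + 1)]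
      have h := Gz p
      rw [show -(p + 1) = -p - 1 by ring, show p + 1 - 1 = p by ring]
      omega
  set M : ℤ := max (b + 1) (-a) with hM
  have hM1 : b + 1 ≤ M := le_max_left _ _
  have hM2 : -a ≤ M := le_max_right _ _
  set m : ℕ := (M - p).toNat with hm
  have h1 : W (p + m - 1) = ⊤ := hb _ (by omega)
  have h2 : W (-(p + m)) = ⊥ := ha _ (by omega)
  rw [step m p, h1, h2, finrank_top, finrank_bot]
  omega

lemma keyND (S : V →ₗ[K] V →ₗ[K] K)
    (hnd : ∀ x : V, (∀ y : V, S x y = 0) → x = 0)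
    (hsym : (∀ x y : V, S x y = S y x) ∨ (∀ x y : V, S x y = - S y x))
    (hinf : ∀ x y : V, S (N x) y + S x (N y) = 0)
    (hW : IsWeightFiltration N W) (p : ℤ) :
    ∀ x ∈ W p, (∀ y ∈ W (-p), S x y = 0) → x ∈ W (p - 1) := by
  intro x hx hperp
  set D := W (-p) with hD
  set R : V →ₗ[K] Module.Dual K D := D.subtype.dualMap.comp S with hR
  have hSinj : Function.Injective (S : V →ₗ[K] Module.Dual K V) := by
    intro u v h
    have h0 : ∀ y, S (u - v) y = 0 := by
      intro y
      rw [map_sub, LinearMap.sub_apply]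
      rw [show S u = S v from h]
      ring
    have := hnd _ h0
    exact sub_eq_zero.mp this
  have hSsurj : Function.Surjective (S : V →ₗ[K] Module.Dual K V) :=
    (LinearMap.injective_iff_surjective_of_finrank_eq_finrank
      Subspace.dual_finrank_eq.symm).mp hSinj
  have hRsurj : Function.Surjective R :=
    (LinearMap.dualMap_surjective_of_injective D.injective_subtype).comp hSsurj
  have hker_rank : finrank K (LinearMap.ker R) + finrank K D = finrank K V := by
    have h := LinearMap.finrank_range_add_finrank_ker R
    rw [LinearMap.range_eq_top.mpr hRsurj, finrank_top, Subspace.dual_finrank_eq] at h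
    omega
  have hsum := sum_dim hW p
  rw [← hD] at hsum
  have hle : W (p - 1) ≤ LinearMap.ker R := by
    intro z hz
    rw [LinearMap.mem_ker]
    ext y
    exact orth hsym hinf hW (p - 1) (-p) (by omega) z hz y y.2
  have heq : W (p - 1) = LinearMap.ker R :=
    Submodule.eq_of_le_of_finrank_le hle (by omega)
  rw [heq, LinearMap.mem_ker]
  ext y
  exact hperp y y.2

end Dim

/-- If `N` is a nilpotent infinitesimal automorphism of `(H, S)`, with `S` a
nondegenerate bilinear form which is symmetric or antisymmetric, and `W` is the
weight filtration of `N`, then for every `i ≥ 0` the pairing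
`(a, b) ↦ S a (N ^ i b)` on `W i` vanishes when `a ∈ W (i-1)` or `b ∈ W (i-1)`
(hence descends to a bilinear form `S^N_i` on `Gr_i = W i / W (i-1)`), and the
descended form is nondegenerate (expressed elementwise: an element of `W i`
pairing to zero with all of `W i` lies in `W (i-1)`, on either side). -/


theorem weight_filtration_induced_form_nondegenerate {K V : Type*} [Field K]
    [AddCommGroup V] [Module K V] [FiniteDimensional K V]
    (S : V →ₗ[K] V →ₗ[K] K)
    (hnd : ∀ x : V, (∀ y : V, S x y = 0) → x = 0)
    (hsym : (∀ x y : V, S x y = S y x) ∨ (∀ x y : V, S x y = - S y x))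
    (N : Module.End K V) (hN : IsNilpotent N)
    (hinf : ∀ x y : V, S (N x) y + S x (N y) = 0)
    (W : ℤ → Submodule K V) (hW : IsWeightFiltration N W) :
    ∀ i : ℕ,
      (∀ a ∈ W (i : ℤ), ∀ b ∈ W (i : ℤ),
        (a ∈ W ((i : ℤ) - 1) ∨ b ∈ W ((i : ℤ) - 1)) → S a ((N ^ i) b) = 0)
      ∧ (∀ a ∈ W (i : ℤ), (∀ b ∈ W (i : ℤ), S a ((N ^ i) b) = 0) → a ∈ W ((i : ℤ) - 1))
      ∧ (∀ b ∈ W (i : ℤ), (∀ a ∈ W (i : ℤ), S a ((N ^ i) b) = 0) → b ∈ W ((i : ℤ) - 1)) := by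
  intro i
  refine ⟨?_, ?_, ?_⟩
  · rintro a ha b hb (h | h)
    · have hNb : (N ^ i) b ∈ W ((i : ℤ) - 2 * i) := hW.pow_mem' i hb
      exact orth hsym hinf hW ((i : ℤ) - 1) ((i : ℤ) - 2 * i) (by omega) a h _ hNb
    · have hNb : (N ^ i) b ∈ W ((i : ℤ) - 1 - 2 * i) := hW.pow_mem' i h
      exact orth hsym hinf hW (i : ℤ) ((i : ℤ) - 1 - 2 * i) (by omega) a ha _ hNb
  · intro a ha h
    refine keyND S hnd hsym hinf hW (i : ℤ) a ha ?_
    intro y hy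
    obtain ⟨x, hx, hr⟩ := hW.surj i y hy
    have h1 : S a ((N ^ i) x) = 0 := h x hx
    have h2 : S a ((N ^ i) x - y) = 0 :=
      orth hsym hinf hW (i : ℤ) (-(i : ℤ) - 1) (by omega) a ha _ hr
    have : S a y = S a ((N ^ i) x) - S a ((N ^ i) x - y) := by simp
    rw [this, h1, h2]
    ring
  · intro b hb h
    have hNb : (N ^ i) b ∈ W (-(i : ℤ)) := by
      have h1 := hW.pow_mem' i hb
      rwa [show (i : ℤ) - 2 * i = -(i : ℤ) by omega] at h1
    have hz : (N ^ i) b ∈ W (-(i : ℤ) - 1) := by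
      have := keyND S hnd hsym hinf hW (-(i : ℤ)) ((N ^ i) b) hNb ?_
      · rwa [show -(i : ℤ) - 1 = -(i : ℤ) - 1 by ring] at this
      · intro y hy
        rw [neg_neg] at hy
        have h0 : S y ((N ^ i) b) = 0 := h y hy
        rcases hsym with hs | hs
        · rw [hs, h0]
        · rw [hs, h0]; ring
    exact hW.inj i b hb hz
end

section
/- Suppose S is a nondegenerate bilinear form on H, either symmetric or antisymmetric, and N is a nilpotent infinitesimal automorphism of (H,S), i.e. S(Nx,y) + S(x,Ny) = 0 for all x, y ∈ H; let W be the weight filtration of N and, for i ≥ 0, let S^N_i be the nondegenerate form on Gr_i H induced by (a,b) ↦ S(a, N^i b). Let N̄ denote the maps Gr_j H → Gr_{j-2} H induced by N and P_j := ker(N̄^{j+1} : Gr_j H → Gr_{-j-2} H) for j ≥ 0, P_j := 0 for j < 0. Then for every i ≥ 0 the Lefschetz decomposition Gr_i H = ⨁_{r ≥ 0} N̄^r(P_{i+2r}) is S^N_i-orthogonal: for r ≠ s, S^N_i(a,b) = 0 for all a ∈ N̄^r(P_{i+2r}) and b ∈ N̄^s(P_{i+2s}). -/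
namespace LinearMap

variable {R M : Type*} [CommRing R] [AddCommGroup M] [Module R M] {B : M →ₗ[R] M →ₗ[R] R}

theorem IsAdjointPair.pow {f g : Module.End R M} (h : IsAdjointPair B B f g) :
    ∀ k : ℕ, IsAdjointPair B B ⇑(f ^ k) ⇑(g ^ k)
  | 0 => by simpa using isAdjointPair_one
  | k + 1 => by rw [pow_succ, pow_succ']; exact (h.pow k).mul h

theorem IsSkewAdjoint.pow_apply_left_eq_zero_iff {f : Module.End R M} (h : B.IsSkewAdjoint f)
    (k : ℕ) (x y : M) : B ((f ^ k) x) y = 0 ↔ B x ((f ^ k) y) = 0 := by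
  have hadj : IsAdjointPair B B ⇑f ⇑(-f) := h
  rw [hadj.pow k x y, neg_pow, Module.End.mul_apply]
  rcases neg_one_pow_eq_or (Module.End R M) k with hk | hk <;> simp [hk]

end LinearMap

theorem IsZFiltration.monotone {K V : Type*} [Field K] [AddCommGroup V] [Module K V]
    {W : ℤ → Submodule K V} (hW : IsZFiltration W) : Monotone W :=
  monotone_int_of_le_succ fun i => by simpa using hW.mono (i + 1)

namespace IsWeightFiltration

variable {K V : Type*} [Field K] [AddCommGroup V] [Module K V] {N : Module.End K V}
  {W : ℤ → Submodule K V} {S : V →ₗ[K] V →ₗ[K] K}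

theorem pow_apply_mem (hW : IsWeightFiltration N W) (k : ℕ) {j : ℤ} {x : V} (hx : x ∈ W j) :
    (N ^ k) x ∈ W (j - 2 * k) := by
  induction k with
  | zero => simpa using hx
  | succ k ih =>
    rw [pow_succ', Module.End.mul_apply]
    convert hW.map_mem _ _ ih using 2
    push_cast; ring

theorem form_eq_zero_of_mem_sub_one_of_mem_neg (hW : IsWeightFiltration N W) (hS : S.IsRefl)
    (hN : S.IsSkewAdjoint N) (m : ℕ) :
    ∀ x ∈ W (m - 1), ∀ y ∈ W (-m), S x y = 0 := by
  obtain ⟨a, ha⟩ := hW.eq_bot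
  refine Nat.decreasingInduction (motive := fun k _ => ∀ x ∈ W (k - 1), ∀ y ∈ W (-k), S x y = 0)
    ?step ?base (le_max_left m (-a).toNat)
  case base =>
    intro x _ y hy
    rw [ha _ (by omega), Submodule.mem_bot] at hy
    rw [hy, map_zero]
  case step =>
    intro k _ ih x hx y hy
    push_cast at ih
    simp only [add_sub_cancel_right, neg_add'] at ih
    obtain ⟨z, hz, hzy⟩ := hW.surj k y hy
    have hx' : x ∈ W k := hW.monotone (by omega) hx
    have hNx : (N ^ k) x ∈ W (-k - 1) := by
      convert hW.pow_apply_mem k hx using 2; ring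
    have h_err : S x ((N ^ k) z - y) = 0 := ih x hx' _ hzy
    have h_main : S x ((N ^ k) z) = 0 :=
      (hN.pow_apply_left_eq_zero_iff k x z).mp (hS _ _ (ih z hz _ hNx))
    rw [map_sub, h_main, zero_sub, neg_eq_zero] at h_err
    exact h_err

theorem form_eq_zero_of_add_neg (hW : IsWeightFiltration N W) (hS : S.IsRefl)
    (hN : S.IsSkewAdjoint N) {a b : ℤ} (hab : a + b < 0) {x y : V} (hx : x ∈ W a)
    (hy : y ∈ W b) : S x y = 0 := by
  wlog hba : b ≤ a generalizing a b x y
  · exact hS _ _ (this (by omega) hy hx (by omega))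
  obtain ⟨m, rfl⟩ : ∃ m : ℕ, b = -m := ⟨(-b).toNat, by omega⟩
  exact hW.form_eq_zero_of_mem_sub_one_of_mem_neg hS hN m x (hW.monotone (by omega) hx) y hy

theorem form_pow_apply_eq_zero_of_primitive (hW : IsWeightFiltration N W) (hS : S.IsRefl)
    (hN : S.IsSkewAdjoint N) {j m : ℕ} {x y : V} (hx : (N ^ (j + 1)) x ∈ W (-j - 3))
    (hy : y ∈ W (j + 2 * (m + 1))) : S ((N ^ (j + m + 1)) x) y = 0 := by
  rw [show j + m + 1 = m + (j + 1) by ring, pow_add, Module.End.mul_apply]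
  exact hW.form_eq_zero_of_add_neg hS hN (by omega) (hW.pow_apply_mem m hx) hy

end IsWeightFiltration

/-- An element of `N̄^r(P_{i+2r})` is represented by `N^r x` with `x ∈ W (i+2r)` primitive,
i.e. `N^(i+2r+1) x ∈ W (-(i+2r)-3)`, and `S^N_i` is evaluated on representatives as
`(a, b) ↦ S a (N^i b)`. -/
theorem lefschetz_decomposition_orthogonal_general {K V : Type*} [Field K]
    [AddCommGroup V] [Module K V]
    (S : V →ₗ[K] V →ₗ[K] K)
    (hsym : (∀ x y : V, S x y = S y x) ∨ (∀ x y : V, S x y = - S y x))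
    (N : Module.End K V)
    (hinf : ∀ x y : V, S (N x) y + S x (N y) = 0)
    (W : ℤ → Submodule K V) (hW : IsWeightFiltration N W) :
    ∀ (i r s : ℕ), r ≠ s →
      ∀ x ∈ W ((i : ℤ) + 2 * r), (N ^ (i + 2 * r + 1)) x ∈ W (-((i : ℤ) + 2 * r) - 3) →
      ∀ y ∈ W ((i : ℤ) + 2 * s), (N ^ (i + 2 * s + 1)) y ∈ W (-((i : ℤ) + 2 * s) - 3) →
      S ((N ^ r) x) ((N ^ i) ((N ^ s) y)) = 0 := by
  intro i r s hrs x hx hxp y hy hyp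
  have hS : S.IsRefl := fun x y h => by rcases hsym with hs | hs <;> simp [hs y x, h]
  have hskew : S.IsSkewAdjoint N := fun x y => by
    simp [eq_neg_of_add_eq_zero_left (hinf x y)]
  rw [← Module.End.mul_apply, ← pow_add]
  rcases hrs.lt_or_gt with hlt | hlt
  · obtain ⟨m, rfl⟩ := Nat.exists_eq_add_of_lt hlt
    rw [← hskew.pow_apply_left_eq_zero_iff, ← Module.End.mul_apply, ← pow_add]
    convert hW.form_pow_apply_eq_zero_of_primitive hS hskew (j := i + 2 * r) (m := m)
      (by exact_mod_cast hxp) (by convert hy using 2; push_cast; ring) using 3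
    congr 2; ring
  · obtain ⟨m, rfl⟩ := Nat.exists_eq_add_of_lt hlt
    rw [hskew.pow_apply_left_eq_zero_iff, ← Module.End.mul_apply, ← pow_add, hS.eq_iff]
    convert hW.form_pow_apply_eq_zero_of_primitive hS hskew (j := i + 2 * s) (m := m)
      (by exact_mod_cast hyp) (by convert hx using 2; push_cast; ring) using 3
    congr 2; ring

/-- **Orthogonality of the Lefschetz decomposition.** Let `N` be a nilpotent
infinitesimal automorphism of `(H, S)`, `S` nondegenerate symmetric or
antisymmetric, `W` the weight filtration of `N`, and for `i ≥ 0` let `S^N_i` be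
the induced nondegenerate form on `Gr_i`, given on representatives by
`(a, b) ↦ S a (N ^ i b)`.  For `r ≠ s`, any element of `N̄^r(P_{i+2r})` is the
class of `N^r x` with `x ∈ W (i+2r)` primitive, i.e. `N^{(i+2r)+1} x ∈ W (-(i+2r)-3)`
(so that the class of `N^{(i+2r)+1} x` in `Gr_{-(i+2r)-2}` vanishes); similarly for
`N̄^s(P_{i+2s})`.  The statement: such classes are `S^N_i`-orthogonal. -/
theorem lefschetz_decomposition_orthogonal {K V : Type*} [Field K]
    [AddCommGroup V] [Module K V] [FiniteDimensional K V]
    (S : V →ₗ[K] V →ₗ[K] K)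
    (hnd : ∀ x : V, (∀ y : V, S x y = 0) → x = 0)
    (hsym : (∀ x y : V, S x y = S y x) ∨ (∀ x y : V, S x y = - S y x))
    (N : Module.End K V) (hN : IsNilpotent N)
    (hinf : ∀ x y : V, S (N x) y + S x (N y) = 0)
    (W : ℤ → Submodule K V) (hW : IsWeightFiltration N W) :
    ∀ (i r s : ℕ), r ≠ s →
      ∀ x ∈ W ((i : ℤ) + 2 * r), (N ^ (i + 2 * r + 1)) x ∈ W (-((i : ℤ) + 2 * r) - 3) →
      ∀ y ∈ W ((i : ℤ) + 2 * s), (N ^ (i + 2 * s + 1)) y ∈ W (-((i : ℤ) + 2 * s) - 3) →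
      S ((N ^ r) x) ((N ^ i) ((N ^ s) y)) = 0 :=
  lefschetz_decomposition_orthogonal_general S hsym N hinf W hW
end
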